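/- For each i in Z/3, every i-balanced word in the free monoid on A is ~-equivalent to a concatenation of words from the seven-element set B_i = {a_i, b_i, c_i, d_i, x_i, b_{i-1} b_i d_{i-1}, b_{i-1} d_i d_{i-1}} (each of which is i-balanced). -/

import Mathlib

/-- The 15-letter alphabet A = {a_i, b_i, c_i, d_i, x_i : i ∈ ℤ/3}. -/
inductive Letter : Type
  | a : ZMod 3 → Letter
  | b : ZMod 3 → Letter
  | c : ZMod 3 → Letter
  | d : ZMod 3 → Letter
  | x : ZMod 3 → Letter
  deriving DecidableEq

/-- Words: the free monoid on the alphabet A. -/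
abbrev Word := FreeMonoid Letter

def a (i : ZMod 3) : Word := FreeMonoid.of (Letter.a i)
def b (i : ZMod 3) : Word := FreeMonoid.of (Letter.b i)
def c (i : ZMod 3) : Word := FreeMonoid.of (Letter.c i)
def d (i : ZMod 3) : Word := FreeMonoid.of (Letter.d i)
def x (i : ZMod 3) : Word := FreeMonoid.of (Letter.x i)

/-- t_i = b_{i+1} d_{i-1} d_{i+1} b_{i-1}. -/
def t (i : ZMod 3) : Word := b (i+1) * d (i-1) * d (i+1) * b (i-1)

/-- t'_i = d_{i-1} b_{i+1} b_{i-1} d_{i+1}. -/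
def t' (i : ZMod 3) : Word := d (i-1) * b (i+1) * b (i-1) * d (i+1)

/-- The defining relations (1)-(10) of the semigroup SK. -/
inductive SKRel : Word → Word → Prop
  | r1a (i : ZMod 3) : SKRel (a i) (a (i+1) * d (i-1))
  | r1b (i : ZMod 3) : SKRel (b i) (a (i-1) * c (i+1))
  | r1c (i : ZMod 3) : SKRel (c i) (b (i-1) * c (i+1))
  | r1d (i : ZMod 3) : SKRel (d i) (a (i+1) * c (i-1))
  | r2 (i : ZMod 3) : SKRel (x i) (d (i+1) * x (i-1) * b (i+1))
  | r3 : SKRel (d 0 * d 1 * d 2) 1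
  | r4bd (i : ZMod 3) : SKRel (b i * d i) 1
  | r4db (i : ZMod 3) : SKRel (d i * b i) 1
  | r5d (i : ZMod 3) : SKRel (d i * x i * d i) (a i * (d i * x i * d i) * c i)
  | r5b (i : ZMod 3) : SKRel (b i * x i * b i) (a i * (b i * x i * b i) * c i)
  | r6 (i : ZMod 3) :
      SKRel (x i * (d (i+1) * d i * d (i-1))) ((d (i+1) * d i * d (i-1)) * x i)
  | r7 (i : ZMod 3) (w : Word)
      (hw : w ∈ ({c (i+1), x (i+1), b i * d (i+1) * d i} : Set Word)) :
      SKRel ((d i * c i) * w) (w * (d i * c i))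
  | r8 (i : ZMod 3) (w : Word)
      (hw : w ∈ ({a (i+1), b (i+1), c (i+1), x (i+1), b i * d (i+1) * d i} : Set Word)) :
      SKRel ((a i * b i) * w) (w * (a i * b i))
  | r9 (i : ZMod 3) (w : Word)
      (hw : w ∈ ({a i, b i, c i, x i, b (i-1) * d i * d (i-1)} : Set Word)) :
      SKRel (t i * w) (w * t i)
  | r10 (i : ZMod 3) (w : Word)
      (hw : w ∈ ({a (i+1), b (i+1), c (i+1), x (i+1), b i * d (i+1) * d i} : Set Word)) :
      SKRel ((d i * x i * b i) * w) (w * (d i * x i * b i))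

/-- The congruence generated by relations (1)-(10); `skCon u v` means u ~ v,
i.e. u and v have equal images in the presented monoid SK. -/
def skCon : Con Word := conGen SKRel

/-- The bracket coding for i-balancedness: a_i,b_i,c_i,d_i,x_i ↦ empty;
a_{i±1}, b_{i-1}, d_{i+1} ↦ '(' (= 1); b_{i+1}, c_{i±1}, d_{i-1} ↦ ')' (= -1);
x_{i±1} ↦ ')(' (= [-1, 1]). -/
def code (i : ZMod 3) : Letter → List ℤ
  | .a j => if j = i then [] else [1]
  | .b j => if j = i then [] else if j = i - 1 then [1] else [-1]
  | .c j => if j = i then [] else [-1]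
  | .d j => if j = i then [] else if j = i + 1 then [1] else [-1]
  | .x j => if j = i then [] else [-1, 1]

/-- The bracket sequence of a word under the i-balancedness coding. -/
def brackets (i : ZMod 3) (w : Word) : List ℤ :=
  ((FreeMonoid.toList w).map (code i)).flatten

/-- A word is i-balanced if its bracket sequence is completely balanced:
every prefix has at least as many '(' as ')', and totals agree. -/
def IBalanced (i : ZMod 3) (w : Word) : Prop :=
  (∀ p : List ℤ, p <+: brackets i w → 0 ≤ p.sum) ∧ (brackets i w).sum = 0

/-- The seven-element set B_i = {a_i, b_i, c_i, d_i, x_i,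
b_{i-1} b_i d_{i-1}, b_{i-1} d_i d_{i-1}}. -/
def Bset (j : ZMod 3) : Set Word :=
  {a j, b j, c j, d j, x j, b (j-1) * b j * d (j-1), b (j-1) * d j * d (j-1)}

/-! In `SK` each `d_j` is a unit with inverse `b_j`, and `d_{i+1} d_{i-1} = b_i`. Every letter is
equivalent to a word in the letters of index `i` and the two brackets `d_{i+1} = '('` and
`d_{i-1} = ')'`, with the same bracket sequence. Let `S_i` be the submonoid of `SK` generated by
`B_i`. The relations (1)–(10) let `d_{i+1}` move to the right across every element of `S_i`:
`d_{i+1} u = u' d_{i+1}` with `u' ∈ S_i`. Reading a word from left to right it therefore stays of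
the form `u d_{i+1}^k` with `u ∈ S_i` and `k` the current bracket depth, a closing bracket being
absorbed by `d_{i+1} d_{i-1} = b_i`. A balanced word ends at depth `0`, that is, in `S_i`. -/

theorem Commute.of_mul_eq_one_right {G : Type*} [Monoid G] {a u v : G} (h : Commute a u)
    (huv : u * v = 1) (hvu : v * u = 1) : Commute a v :=
  Commute.units_inv_right (u := ⟨u, v, huv, hvu⟩) h

namespace SK

theorem add_one_add_one : ∀ i : ZMod 3, i + 1 + 1 = i - 1 := by decide
theorem sub_one_sub_one : ∀ i : ZMod 3, i - 1 - 1 = i + 1 := by decide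
theorem eq_or_eq_add_one_or_eq_sub_one : ∀ i j : ZMod 3, j = i ∨ j = i + 1 ∨ j = i - 1 := by
  decide
theorem sub_one_ne_add_one : ∀ i : ZMod 3, i - 1 ≠ i + 1 := by decide

abbrev M : Type := skCon.Quotient

def q : Word →* M := skCon.mk'

theorem q_eq_of_rel {u v : Word} (h : SKRel u v) : q u = q v :=
  skCon.eq.mpr (ConGen.Rel.of u v h)

abbrev qa (j : ZMod 3) : M := q (a j)
abbrev qb (j : ZMod 3) : M := q (b j)
abbrev qc (j : ZMod 3) : M := q (c j)
abbrev qd (j : ZMod 3) : M := q (d j)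
abbrev qx (j : ZMod 3) : M := q (x j)

theorem qb_mul_qd (j : ZMod 3) : qb j * qd j = 1 := by
  simpa only [map_mul, map_one] using q_eq_of_rel (SKRel.r4bd j)

theorem qd_mul_qb (j : ZMod 3) : qd j * qb j = 1 := by
  simpa only [map_mul, map_one] using q_eq_of_rel (SKRel.r4db j)

theorem qb_mul_qd_mul (j : ZMod 3) (z : M) : qb j * (qd j * z) = z := by
  rw [← mul_assoc, qb_mul_qd, one_mul]

theorem qd_mul_qb_mul (j : ZMod 3) (z : M) : qd j * (qb j * z) = z := by
  rw [← mul_assoc, qd_mul_qb, one_mul]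

theorem qd_add_one_mul_qd_sub_one (i : ZMod 3) : qd (i+1) * qd (i-1) = qb i := by
  have h : qd 0 * qd 1 * qd 2 = 1 := by
    simpa only [map_mul, map_one] using q_eq_of_rel SKRel.r3
  have h0 : qd 1 * qd 2 = qb 0 := by
    rw [← qb_mul_qd_mul 0 (qd 1 * qd 2), ← mul_assoc (qd 0), h, mul_one]
  fin_cases i
  · exact h0
  · change qd 2 * qd 0 = qb 1
    rw [← qb_mul_qd_mul 1 (qd 2 * qd 0), ← mul_assoc (qd 1), h0, qb_mul_qd, mul_one]
  · change qd 0 * qd 1 = qb 2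
    rw [← mul_one (qd 0 * qd 1), ← qd_mul_qb 2, ← mul_assoc, h, one_mul]

theorem qd_sub_one_mul_qd_mul_qd_add_one (i : ZMod 3) : qd (i-1) * qd i * qd (i+1) = 1 := by
  have h := qd_add_one_mul_qd_sub_one (i+1)
  rw [add_one_add_one, add_sub_cancel_right] at h
  rw [h, qb_mul_qd]

theorem qb_mul_qb_sub_one (i : ZMod 3) : qb i * qb (i-1) = qd (i+1) := by
  rw [← qd_add_one_mul_qd_sub_one, mul_assoc, qd_mul_qb, mul_one]

variable (i : ZMod 3)

def S : Submonoid M := (Submonoid.closure (Bset i)).map q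

abbrev qbbd : M := qb (i-1) * qb i * qd (i-1)
abbrev qbdd : M := qb (i-1) * qd i * qd (i-1)

variable {i} in
theorem q_mem_S {u : Word} (hu : u ∈ Bset i) : q u ∈ S i :=
  Submonoid.mem_map_of_mem q (Submonoid.subset_closure hu)

theorem qa_mem_S : qa i ∈ S i := q_mem_S (by simp [Bset])
theorem qb_mem_S : qb i ∈ S i := q_mem_S (by simp [Bset])
theorem qc_mem_S : qc i ∈ S i := q_mem_S (by simp [Bset])
theorem qd_mem_S : qd i ∈ S i := q_mem_S (by simp [Bset])
theorem qx_mem_S : qx i ∈ S i := q_mem_S (by simp [Bset])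

theorem qbbd_mem_S : qbbd i ∈ S i := by
  simpa only [map_mul] using q_mem_S (u := b (i-1) * b i * d (i-1)) (by simp [Bset])

theorem qbdd_mem_S : qbdd i ∈ S i := by
  simpa only [map_mul] using q_mem_S (u := b (i-1) * d i * d (i-1)) (by simp [Bset])

variable {i} in
theorem commute_qd_of_commute_qb {u : M} (h : Commute (qb i) u) : Commute (qd i) u :=
  (h.symm.of_mul_eq_one_right (qb_mul_qd i) (qd_mul_qb i)).symm

theorem commute_qd_qa_mul_qb : Commute (qd (i+1)) (qa i * qb i) := by
  refine commute_qd_of_commute_qb (Commute.symm ?_)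
  have h := q_eq_of_rel (SKRel.r8 i (b (i+1)) (by simp))
  simp only [map_mul] at h
  exact h

theorem commute_qd_qd_mul_qx_mul_qb : Commute (qd (i+1)) (qd i * qx i * qb i) := by
  refine commute_qd_of_commute_qb (Commute.symm ?_)
  have h := q_eq_of_rel (SKRel.r10 i (b (i+1)) (by simp))
  simp only [map_mul] at h
  exact h

theorem commute_qd_qbdd_mul_qb : Commute (qd (i+1)) (qbdd i * qb i) := by
  refine commute_qd_of_commute_qb (Commute.symm ?_)
  have h := q_eq_of_rel (SKRel.r9 (i+1) (b (i+1)) (by simp))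
  simp only [t, map_mul, add_one_add_one, add_sub_cancel_right] at h
  exact h

theorem commute_qd_qd_mul_qbbd : Commute (qd (i+1)) (qd i * qbbd i) := by
  refine (commute_qd_qbdd_mul_qb i).of_mul_eq_one_right ?_ ?_ <;>
    simp only [mul_assoc, qb_mul_qd_mul, qd_mul_qb_mul, qb_mul_qd, qd_mul_qb]

theorem commute_qd_mul_qc : Commute (qd i * qc i) (qb i * qd (i+1) * qd i) := by
  have h := q_eq_of_rel (SKRel.r7 i (b i * d (i+1) * d i) (by simp))
  simp only [map_mul] at h
  exact h

theorem semiconjBy_qd : SemiconjBy (qd (i+1)) (qd i) (qb i * qbdd i * qd i) :=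
  calc qd (i+1) * qd i = qb i * qb (i-1) * qd i * (qd (i-1) * qd i * qd (i+1)) := by
        rw [qb_mul_qb_sub_one, qd_sub_one_mul_qd_mul_qd_add_one, mul_one]
    _ = qb i * qbdd i * qd i * qd (i+1) := by simp only [mul_assoc]

theorem semiconjBy_qb : SemiconjBy (qd (i+1)) (qb i) (qb i * qbbd i * qd i) :=
  calc qd (i+1) * qb i = qb i * qb (i-1) * qb i * (qd (i-1) * qd i * qd (i+1)) := by
        rw [qb_mul_qb_sub_one, qd_sub_one_mul_qd_mul_qd_add_one, mul_one]
    _ = qb i * qbbd i * qd i * qd (i+1) := by simp only [mul_assoc]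

theorem semiconjBy_qd_mul_qd_mul_qc :
    SemiconjBy (qd (i+1)) (qd i * (qd i * qc i))
      (qd i * (qd i * qc i) * qb i * (qb i * qbdd i * qd i)) :=
  calc qd (i+1) * (qd i * (qd i * qc i))
      = qd i * (qb i * qd (i+1) * qd i) * (qd i * qc i) := by
        simp only [mul_assoc, qd_mul_qb_mul]
    _ = qd i * (qd i * qc i) * qb i * (qd (i+1) * qd i) := by
        rw [mul_assoc, ← (commute_qd_mul_qc i).eq]; simp only [mul_assoc]
    _ = qd i * (qd i * qc i) * qb i * (qb i * qbdd i * qd i) * qd (i+1) := by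
        rw [(semiconjBy_qd i).eq]; simp only [mul_assoc]

def Crosses (u : M) : Prop := ∃ u' ∈ S i, SemiconjBy (qd (i+1)) u u'

variable {i}

theorem Crosses.mul {u v : M} (hu : Crosses i u) (hv : Crosses i v) : Crosses i (u * v) := by
  obtain ⟨u', hu', hu⟩ := hu
  obtain ⟨v', hv', hv⟩ := hv
  exact ⟨u' * v', mul_mem hu' hv', hu.mul_right hv⟩

theorem Crosses.of_commute {u : M} (h : Commute (qd (i+1)) u) (hu : u ∈ S i) : Crosses i u :=
  ⟨u, hu, h⟩

theorem crosses_q_of_mem_closure {w : Word} (hw : w ∈ Submonoid.closure (Bset i)) :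
    Crosses i (q w) := by
  have hd : Crosses i (qd i) :=
    ⟨_, mul_mem (mul_mem (qb_mem_S i) (qbdd_mem_S i)) (qd_mem_S i), semiconjBy_qd i⟩
  have hb : Crosses i (qb i) :=
    ⟨_, mul_mem (mul_mem (qb_mem_S i) (qbbd_mem_S i)) (qd_mem_S i), semiconjBy_qb i⟩
  induction hw using Submonoid.closure_induction with
  | one => exact ⟨1, one_mem _, SemiconjBy.one_right _⟩
  | mul _ _ _ _ hu hv => rw [map_mul]; exact hu.mul hv
  | mem u hu =>
    -- factor each generator into `b_i`, `d_i` and words that commute with `d_{i+1}` by (7)–(10)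
    simp only [Bset, Set.mem_insert_iff, Set.mem_singleton_iff] at hu
    rcases hu with rfl | rfl | rfl | rfl | rfl | rfl | rfl
    · have h : q (a i) = qa i * qb i * qd i := by rw [mul_assoc, qb_mul_qd, mul_one]
      rw [h]
      exact (Crosses.of_commute (commute_qd_qa_mul_qb i)
        (mul_mem (qa_mem_S i) (qb_mem_S i))).mul hd
    · exact hb
    · have h : q (c i) = qb i * qb i * (qd i * (qd i * qc i)) := by
        simp only [mul_assoc, qb_mul_qd_mul]
      rw [h]
      refine (hb.mul hb).mul ⟨_, ?_, semiconjBy_qd_mul_qd_mul_qc i⟩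
      apply_rules [qbdd_mem_S, qb_mem_S, qc_mem_S, qd_mem_S, mul_mem]
    · exact hd
    · have h : q (x i) = qb i * (qd i * qx i * qb i) * qd i := by
        simp only [mul_assoc, qb_mul_qd_mul, qb_mul_qd, mul_one]
      rw [h]
      exact (hb.mul (Crosses.of_commute (commute_qd_qd_mul_qx_mul_qb i)
        (mul_mem (mul_mem (qd_mem_S i) (qx_mem_S i)) (qb_mem_S i)))).mul hd
    · have h : q (b (i-1) * b i * d (i-1)) = qb i * (qd i * qbbd i) := by
        simp only [map_mul, qb_mul_qd_mul]
      rw [h]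
      exact hb.mul (Crosses.of_commute (commute_qd_qd_mul_qbbd i)
        (mul_mem (qd_mem_S i) (qbbd_mem_S i)))
    · have h : q (b (i-1) * d i * d (i-1)) = qbdd i * qb i * qd i := by
        simp only [map_mul, mul_assoc, qb_mul_qd, mul_one]
      rw [h]
      exact (Crosses.of_commute (commute_qd_qbdd_mul_qb i)
        (mul_mem (qbdd_mem_S i) (qb_mem_S i))).mul hd

theorem crosses_of_mem_S {u : M} (hu : u ∈ S i) : Crosses i u := by
  obtain ⟨w, hw, rfl⟩ := Submonoid.mem_map.mp hu
  exact crosses_q_of_mem_closure hw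

theorem exists_semiconjBy_pow (n : ℕ) {u : M} (hu : u ∈ S i) :
    ∃ u' ∈ S i, SemiconjBy (qd (i+1) ^ n) u u' := by
  induction n generalizing u with
  | zero => exact ⟨u, hu, SemiconjBy.one_left u⟩
  | succ n ih =>
    obtain ⟨u₁, hu₁, h₁⟩ := crosses_of_mem_S hu
    obtain ⟨u₂, hu₂, h₂⟩ := ih hu₁
    exact ⟨u₂, hu₂, pow_succ (qd (i+1)) n ▸ h₂.mul_left h₁⟩

variable (i) in
def Reach (m : M) (k : ℤ) : Prop :=
  ∃ u ∈ S i, ∃ n : ℕ, (n : ℤ) = k ∧ m = u * qd (i+1) ^ n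

theorem Reach.mul_of_mem {m v : M} {k : ℤ} (h : Reach i m k) (hv : v ∈ S i) :
    Reach i (m * v) k := by
  obtain ⟨u, hu, n, rfl, rfl⟩ := h
  obtain ⟨v', hv', hcross⟩ := exists_semiconjBy_pow n hv
  exact ⟨u * v', mul_mem hu hv', n, rfl, by rw [mul_assoc, hcross.eq, mul_assoc]⟩

theorem Reach.mul_qd_add_one {m : M} {k : ℤ} (h : Reach i m k) :
    Reach i (m * qd (i+1)) (k + 1) := by
  obtain ⟨u, hu, n, rfl, rfl⟩ := h
  exact ⟨u, hu, n + 1, by push_cast; rfl, by rw [pow_succ, mul_assoc]⟩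

theorem Reach.mul_qd_sub_one {m : M} {k : ℤ} (h : Reach i m k) (hk : 1 ≤ k) :
    Reach i (m * qd (i-1)) (k - 1) := by
  obtain ⟨u, hu, n, rfl, rfl⟩ := h
  obtain ⟨n, rfl⟩ : ∃ n', n = n' + 1 := ⟨n - 1, by omega⟩
  have h : Reach i (u * qd (i+1) ^ n) n := ⟨u, hu, n, rfl, rfl⟩
  convert h.mul_of_mem (qb_mem_S i) using 1
  · rw [pow_succ, mul_assoc, mul_assoc, qd_add_one_mul_qd_sub_one, mul_assoc]
  · push_cast; ring

variable (i)

theorem brackets_mul (u v : Word) : brackets i (u * v) = brackets i u ++ brackets i v := by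
  simp [brackets]

def PreservesReach (w : Word) : Prop :=
  ∀ (m : M) (k : ℤ), Reach i m k → (∀ p, p <+: brackets i w → 0 ≤ k + p.sum) →
    Reach i (m * q w) (k + (brackets i w).sum)

def reachSubmonoid : Submonoid Word where
  carrier := {w | PreservesReach i w}
  one_mem' m k hm _ := by simpa [brackets] using hm
  mul_mem' {u v} hu hv m k hm hpre := by
    rw [brackets_mul] at hpre
    have hu' := hu m k hm fun p hp => hpre p (hp.trans (List.prefix_append _ _))
    have hv' := hv _ _ hu' fun p hp => by
      have := hpre (brackets i u ++ p) ((List.prefix_append_right_inj _).mpr hp)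
      rw [List.sum_append] at this
      linarith
    rwa [map_mul, brackets_mul, List.sum_append, ← mul_assoc, ← add_assoc]

variable {i}

theorem mem_reachSubmonoid_of_mem_Bset {u : Word} (hu : u ∈ Bset i) (hb : brackets i u = []) :
    u ∈ reachSubmonoid i := fun m k hm _ => by
  simpa [hb] using hm.mul_of_mem (q_mem_S hu)

theorem d_add_one_mem_reachSubmonoid : d (i+1) ∈ reachSubmonoid i := fun m k hm _ => by
  have hb : brackets i (d (i+1)) = [1] := by simp [brackets, d, code]
  simpa [hb] using hm.mul_qd_add_one

theorem d_sub_one_mem_reachSubmonoid : d (i-1) ∈ reachSubmonoid i := fun m k hm hpre => by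
  have hb : brackets i (d (i-1)) = [-1] := by
    simp [brackets, d, code, sub_one_ne_add_one]
  have hk := hpre [-1] (by rw [hb])
  simp only [List.sum_cons, List.sum_nil] at hk
  simpa [hb, ← sub_eq_add_neg] using hm.mul_qd_sub_one (by linarith)

theorem mem_reachSubmonoid_of_q_eq {u v : Word} (hu : u ∈ reachSubmonoid i) (hq : q v = q u)
    (hb : brackets i u = brackets i v) : v ∈ reachSubmonoid i := by
  intro m k
  rw [hq, ← hb]
  exact hu m k

variable (i)

theorem q_a_sub_one : q (a (i-1)) = q (a i * d (i+1)) := by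
  simpa only [sub_add_cancel, sub_one_sub_one] using q_eq_of_rel (SKRel.r1a (i-1))

theorem q_a_add_one : q (a (i+1)) = q (a i * d (i+1) * d i) := by
  have h := q_eq_of_rel (SKRel.r1a (i+1))
  rw [add_one_add_one, add_sub_cancel_right, map_mul, q_a_sub_one] at h
  rw [h]; simp only [map_mul]

theorem q_b_add_one : q (b (i+1)) = q (d (i-1) * d i) := by
  have h := qd_add_one_mul_qd_sub_one (i+1)
  rw [add_one_add_one, add_sub_cancel_right] at h
  rw [map_mul, h]

theorem q_b_sub_one : q (b (i-1)) = q (d i * d (i+1)) := by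
  have h := qd_add_one_mul_qd_sub_one (i-1)
  rw [sub_add_cancel, sub_one_sub_one] at h
  rw [map_mul, h]

theorem q_c_add_one : q (c (i+1)) = q (d (i-1) * c i) := by
  have h := q_eq_of_rel (SKRel.r1c i)
  rw [map_mul] at h
  rw [map_mul, h, qd_mul_qb_mul]

theorem q_c_sub_one : q (c (i-1)) = q (d (i-1) * d i * c i) := by
  have h := q_eq_of_rel (SKRel.r1c (i-1))
  rw [sub_one_sub_one, sub_add_cancel, map_mul, q_b_add_one] at h
  rw [h]; simp only [map_mul]

theorem q_x_add_one : q (x (i+1)) = q (d (i-1) * x i * d i * d (i+1)) := by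
  have h := q_eq_of_rel (SKRel.r2 (i+1))
  rw [add_one_add_one, add_sub_cancel_right, map_mul, q_b_sub_one] at h
  rw [h]; simp only [map_mul, mul_assoc]

theorem q_x_sub_one : q (x (i-1)) = q (d i * d (i-1) * x i * d i * d (i+1) * b i) := by
  have h := q_eq_of_rel (SKRel.r2 (i-1))
  rw [sub_add_cancel, sub_one_sub_one, map_mul, map_mul, q_x_add_one] at h
  rw [h]; simp only [map_mul, mul_assoc]

variable {i}

theorem d_mem_reachSubmonoid (j : ZMod 3) : d j ∈ reachSubmonoid i := by
  rcases eq_or_eq_add_one_or_eq_sub_one i j with rfl | rfl | rfl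
  · exact mem_reachSubmonoid_of_mem_Bset (by simp [Bset]) (by simp [brackets, d, code])
  · exact d_add_one_mem_reachSubmonoid
  · exact d_sub_one_mem_reachSubmonoid

theorem a_mem_reachSubmonoid (j : ZMod 3) : a j ∈ reachSubmonoid i := by
  have ha : a i ∈ reachSubmonoid i :=
    mem_reachSubmonoid_of_mem_Bset (by simp [Bset]) (by simp [brackets, a, code])
  rcases eq_or_eq_add_one_or_eq_sub_one i j with rfl | rfl | rfl
  · exact ha
  · exact mem_reachSubmonoid_of_q_eq (mul_mem (mul_mem ha (d_mem_reachSubmonoid _))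
      (d_mem_reachSubmonoid _)) (q_a_add_one i) (by simp [brackets, a, d, code])
  · exact mem_reachSubmonoid_of_q_eq (mul_mem ha (d_mem_reachSubmonoid _)) (q_a_sub_one i)
      (by simp [brackets, a, d, code])

theorem b_mem_reachSubmonoid (j : ZMod 3) : b j ∈ reachSubmonoid i := by
  rcases eq_or_eq_add_one_or_eq_sub_one i j with rfl | rfl | rfl
  · exact mem_reachSubmonoid_of_mem_Bset (by simp [Bset]) (by simp [brackets, b, code])
  · exact mem_reachSubmonoid_of_q_eq (mul_mem (d_mem_reachSubmonoid _) (d_mem_reachSubmonoid _))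
      (q_b_add_one i)
      (by simp [brackets, b, d, code, sub_one_ne_add_one i, (sub_one_ne_add_one i).symm])
  · exact mem_reachSubmonoid_of_q_eq (mul_mem (d_mem_reachSubmonoid _) (d_mem_reachSubmonoid _))
      (q_b_sub_one i) (by simp [brackets, b, d, code])

theorem c_mem_reachSubmonoid (j : ZMod 3) : c j ∈ reachSubmonoid i := by
  have hc : c i ∈ reachSubmonoid i :=
    mem_reachSubmonoid_of_mem_Bset (by simp [Bset]) (by simp [brackets, c, code])
  rcases eq_or_eq_add_one_or_eq_sub_one i j with rfl | rfl | rfl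
  · exact hc
  · exact mem_reachSubmonoid_of_q_eq (mul_mem (d_mem_reachSubmonoid _) hc) (q_c_add_one i)
      (by simp [brackets, c, d, code, sub_one_ne_add_one])
  · exact mem_reachSubmonoid_of_q_eq
      (mul_mem (mul_mem (d_mem_reachSubmonoid _) (d_mem_reachSubmonoid _)) hc) (q_c_sub_one i)
      (by simp [brackets, c, d, code, sub_one_ne_add_one])

theorem x_mem_reachSubmonoid (j : ZMod 3) : x j ∈ reachSubmonoid i := by
  have hx : x i ∈ reachSubmonoid i :=
    mem_reachSubmonoid_of_mem_Bset (by simp [Bset]) (by simp [brackets, x, code])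
  have hd := d_mem_reachSubmonoid (i := i)
  rcases eq_or_eq_add_one_or_eq_sub_one i j with rfl | rfl | rfl
  · exact hx
  · exact mem_reachSubmonoid_of_q_eq (mul_mem (mul_mem (mul_mem (hd _) hx) (hd _)) (hd _))
      (q_x_add_one i) (by simp [brackets, x, d, code, sub_one_ne_add_one])
  · exact mem_reachSubmonoid_of_q_eq
      (mul_mem (mul_mem (mul_mem (mul_mem (mul_mem (hd _) (hd _)) hx) (hd _)) (hd _))
        (b_mem_reachSubmonoid i))
      (q_x_sub_one i) (by simp [brackets, x, b, d, code, sub_one_ne_add_one])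

theorem letter_mem_reachSubmonoid (ℓ : Letter) : FreeMonoid.of ℓ ∈ reachSubmonoid i := by
  cases ℓ with
  | a j => exact a_mem_reachSubmonoid j
  | b j => exact b_mem_reachSubmonoid j
  | c j => exact c_mem_reachSubmonoid j
  | d j => exact d_mem_reachSubmonoid j
  | x j => exact x_mem_reachSubmonoid j

theorem reachSubmonoid_eq_top : reachSubmonoid i = ⊤ := by
  rw [eq_top_iff, ← FreeMonoid.closure_range_of, Submonoid.closure_le]
  rintro _ ⟨ℓ, rfl⟩
  exact letter_mem_reachSubmonoid ℓ

theorem iBalanced_iff {w : Word} :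
    IBalanced i w ↔ (∀ p ∈ (brackets i w).inits, 0 ≤ p.sum) ∧ (brackets i w).sum = 0 := by
  simp only [IBalanced, List.mem_inits]

theorem iBalanced_of_mem_Bset {u : Word} (hu : u ∈ Bset i) : IBalanced i u := by
  simp only [Bset, Set.mem_insert_iff, Set.mem_singleton_iff] at hu
  rcases hu with rfl | rfl | rfl | rfl | rfl | rfl | rfl <;>
    simp [iBalanced_iff, brackets, code, a, b, c, d, x, sub_one_ne_add_one]

theorem q_mem_S_of_iBalanced {w : Word} (hw : IBalanced i w) : q w ∈ S i := by
  have hreach : w ∈ reachSubmonoid i := reachSubmonoid_eq_top ▸ Submonoid.mem_top w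
  obtain ⟨u, hu, n, hn, hq⟩ :=
    hreach 1 0 ⟨1, one_mem _, 0, rfl, by simp⟩ (by simpa using hw.1)
  rw [hw.2] at hn
  obtain rfl : n = 0 := by omega
  rw [one_mul, pow_zero, mul_one] at hq
  exact hq ▸ hu

theorem exists_list_of_q_mem_S {w : Word} (hw : q w ∈ S i) :
    ∃ ws : List Word, (∀ u ∈ ws, u ∈ Bset i) ∧ skCon w ws.prod := by
  obtain ⟨w', hw', hq⟩ := Submonoid.mem_map.mp hw
  obtain ⟨ws, hws, rfl⟩ := Submonoid.exists_list_of_mem_closure hw'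
  exact ⟨ws, hws, skCon.eq.mp hq.symm⟩

end SK

/-- Lemma 5: each of the words of B_i is i-balanced, and every i-balanced word is
equivalent to a concatenation of words from B_i. -/
theorem lemma5 : ∀ i : ZMod 3,
    (∀ u ∈ Bset i, IBalanced i u) ∧
    ∀ w : Word, IBalanced i w →
      ∃ ws : List Word, (∀ u ∈ ws, u ∈ Bset i) ∧ skCon w ws.prod :=
  fun _ => ⟨fun _ hu => SK.iBalanced_of_mem_Bset hu,
    fun _ hw => SK.exists_list_of_q_mem_S (SK.q_mem_S_of_iBalanced hw)⟩
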